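/- arXiv:2011.04925 — 7 statements merged into one kernel-verified Lean document; each statement's English description precedes it below -/
import Mathlib

section
/- Let d : F × C → ℝ_{≥0} be distances, x* : F → ℝ_{≥0} with ∑_{i∈F} x*_i ≥ k, and suppose for a client j there exist a scenario S of k clients and nonnegative y^S with ∑_i y^S_{ip} = 1 for each p ∈ S, y^S_{ip} ≤ x*_i summed over p ∈ S, d(p,j) ≤ D for all p ∈ S (in a metric containing F and C), and ∑_{i,p∈S} d(i,p) y^S_{ip} ≤ Z. Then setting y_{ij} = (1/k)∑_{p∈S} y^S_{ip} yields ∑_i y_{ij} ≥ 1, 0 ≤ y_{ij} ≤ x*_i/k for all i, and ∑_i d(i,j) y_{ij} ≤ Z/k + 2D. -/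
/-- Averaging construction (Lemma 3): from a feasible assignment of a scenario `S`
of `k` clients all within distance `D` of client `j`, the averaged assignment
`y i = (1/k) ∑ p ∈ S, yS i p` covers `j`, uses at most `x* i / k` of each supply,
and has cost at most `Z/k + 2D`. -/
theorem stmt_4 {M : Type*} [MetricSpace M] (F S : Finset M) (j : M)
    (k : ℕ) (hk : 1 ≤ k) (hS : S.card = k)
    (xstar : M → ℝ) (hx0 : ∀ i ∈ F, 0 ≤ xstar i)
    (hxk : (k : ℝ) ≤ ∑ i ∈ F, xstar i)
    (yS : M → M → ℝ) (hy0 : ∀ i ∈ F, ∀ p ∈ S, 0 ≤ yS i p)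
    (hcover : ∀ p ∈ S, (∑ i ∈ F, yS i p) = 1)
    (hcap : ∀ i ∈ F, (∑ p ∈ S, yS i p) ≤ xstar i)
    (D : ℝ) (hD : ∀ p ∈ S, dist p j ≤ D)
    (Z : ℝ) (hZ : (∑ i ∈ F, ∑ p ∈ S, dist i p * yS i p) ≤ Z) :
    (1 ≤ ∑ i ∈ F, (1 / (k : ℝ)) * ∑ p ∈ S, yS i p) ∧
    (∀ i ∈ F, 0 ≤ (1 / (k : ℝ)) * ∑ p ∈ S, yS i p ∧
        (1 / (k : ℝ)) * ∑ p ∈ S, yS i p ≤ xstar i / k) ∧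
    (∑ i ∈ F, dist i j * ((1 / (k : ℝ)) * ∑ p ∈ S, yS i p)) ≤ Z / k + 2 * D := by
  have hkpos : (0:ℝ) < k := by exact_mod_cast hk
  have hSne : S.Nonempty := Finset.card_pos.mp (by omega)
  have hDpos : 0 ≤ D := by
    obtain ⟨p, hp⟩ := hSne
    exact le_trans dist_nonneg (hD p hp)
  refine ⟨?_, ?_, ?_⟩
  · rw [← Finset.mul_sum, Finset.sum_comm]
    have : ∑ p ∈ S, ∑ i ∈ F, yS i p = (k:ℝ) := by
      rw [Finset.sum_congr rfl hcover]; simp [hS]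
    rw [this, one_div, inv_mul_cancel₀ (ne_of_gt hkpos)]
  · intro i hi
    have hnn : 0 ≤ ∑ p ∈ S, yS i p := Finset.sum_nonneg fun p hp => hy0 i hi p hp
    refine ⟨mul_nonneg (by positivity) hnn, ?_⟩
    calc (1 / (k:ℝ)) * ∑ p ∈ S, yS i p ≤ (1 / (k:ℝ)) * xstar i :=
          mul_le_mul_of_nonneg_left (hcap i hi) (by positivity)
      _ = xstar i / k := by ring
  · have key : ∀ i ∈ F, dist i j * ((1 / (k:ℝ)) * ∑ p ∈ S, yS i p) ≤
        (1 / (k:ℝ)) * ∑ p ∈ S, (dist i p + D) * yS i p := by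
      intro i hi
      have h1 : dist i j * ∑ p ∈ S, yS i p ≤ ∑ p ∈ S, (dist i p + D) * yS i p := by
        rw [Finset.mul_sum]
        apply Finset.sum_le_sum
        intro p hp
        apply mul_le_mul_of_nonneg_right _ (hy0 i hi p hp)
        linarith [dist_triangle i p j, hD p hp]
      calc dist i j * ((1 / (k:ℝ)) * ∑ p ∈ S, yS i p)
          = (1 / (k:ℝ)) * (dist i j * ∑ p ∈ S, yS i p) := by ring
        _ ≤ _ := mul_le_mul_of_nonneg_left h1 (by positivity)
    calc ∑ i ∈ F, dist i j * ((1 / (k:ℝ)) * ∑ p ∈ S, yS i p)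
        ≤ ∑ i ∈ F, (1 / (k:ℝ)) * ∑ p ∈ S, (dist i p + D) * yS i p :=
          Finset.sum_le_sum key
      _ = (1 / (k:ℝ)) * ((∑ i ∈ F, ∑ p ∈ S, dist i p * yS i p)
            + D * ∑ p ∈ S, ∑ i ∈ F, yS i p) := by
          rw [← Finset.mul_sum]
          congr 1
          simp_rw [add_mul, Finset.sum_add_distrib]
          congr 1
          rw [Finset.sum_comm, Finset.mul_sum]
          exact Finset.sum_congr rfl fun p _ => by rw [Finset.mul_sum]
      _ = (1 / (k:ℝ)) * ((∑ i ∈ F, ∑ p ∈ S, dist i p * yS i p) + D * k) := by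
          rw [Finset.sum_congr rfl hcover]; simp [hS]
      _ ≤ (1 / (k:ℝ)) * (Z + D * k) := by
          apply mul_le_mul_of_nonneg_left _ (by positivity)
          linarith
      _ = Z / k + D := by field_simp
      _ ≤ Z / k + 2 * D := by linarith
end

section
/- Under the hypotheses of the |C_2| ≤ k lemma: let C_2 = G_1 ∪ ... ∪ G_T be a disjoint union of client sets, r > 0, and OPT_2 ≥ 0, such that for each t any scenario containing all of G_t incurs second-stage cost at least r·|G_t|/2, each |G_t| < k, and r = 5·OPT_2/k where OPT_2 bounds the worst-case second-stage cost over scenarios of size at most k. Then |C_2| ≤ k. -/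
/-- Subset selection lemma: if all parts are `< k` and the total exceeds `k`,
there is a subfamily with total in `(k/2, k]`. -/
lemma stmt_6_aux (T k : ℕ) (a : ℕ → ℕ) (ha : ∀ t ∈ Finset.Icc 1 T, a t < k)
    (htot : k < ∑ t ∈ Finset.Icc 1 T, a t) :
    ∃ I ⊆ Finset.Icc 1 T, (∑ t ∈ I, a t) ≤ k ∧ k < 2 * ∑ t ∈ I, a t := by
  classical
  set F := (Finset.Icc 1 T).powerset.filter (fun I => ∑ t ∈ I, a t ≤ k) with hF
  have hne : F.Nonempty := ⟨∅, by simp [hF]⟩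
  obtain ⟨I, hIF, hmax⟩ := F.exists_max_image (fun I => ∑ t ∈ I, a t) hne
  simp only [hF, Finset.mem_filter, Finset.mem_powerset] at hIF
  obtain ⟨hIsub, hIsum⟩ := hIF
  by_cases h2 : k < 2 * ∑ t ∈ I, a t
  · exact ⟨I, hIsub, hIsum, h2⟩
  push_neg at h2
  have hsd := Finset.sum_sdiff (f := a) hIsub
  have hc : 0 < ∑ t ∈ Finset.Icc 1 T \ I, a t := by omega
  obtain ⟨t, ht, hat⟩ : ∃ t ∈ Finset.Icc 1 T \ I, 0 < a t := by
    by_contra hcon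
    push_neg at hcon
    have : ∑ t ∈ Finset.Icc 1 T \ I, a t = 0 :=
      Finset.sum_eq_zero (fun x hx => Nat.le_zero.mp (hcon x hx))
    omega
  have htI : t ∉ I := (Finset.mem_sdiff.mp ht).2
  have htIcc : t ∈ Finset.Icc 1 T := (Finset.mem_sdiff.mp ht).1
  have hins : ∑ x ∈ insert t I, a x = a t + ∑ x ∈ I, a x :=
    Finset.sum_insert htI
  have hbig : k < a t + ∑ x ∈ I, a x := by
    by_contra hle
    push_neg at hle
    have hmem : insert t I ∈ F := by
      simp only [hF, Finset.mem_filter, Finset.mem_powerset]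
      exact ⟨Finset.insert_subset htIcc hIsub, by omega⟩
    have := hmax (insert t I) hmem
    simp only [hins] at this
    omega
  refine ⟨{t}, Finset.singleton_subset_iff.mpr htIcc, ?_, ?_⟩
  · simpa using (ha t htIcc).le
  · simp only [Finset.sum_singleton]
    omega

/-- The set `C₂` has at most `k` clients: if `C₂` is a disjoint union of groups
`G 1, …, G T`, each of size less than `k`, any scenario of size at most `k`
containing some of the groups incurs second-stage cost at least `(r/2)` times the
total size of the contained groups, every scenario of size at most `k` has cost at
most `OPT₂`, and `r = 5·OPT₂/k > 0`, then `|C₂| ≤ k`. -/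
theorem stmt_6 {β : Type*} [DecidableEq β] (T : ℕ) (G : ℕ → Finset β)
    (C2 : Finset β) (hC2 : C2 = (Finset.Icc 1 T).biUnion G)
    (hdisj : ∀ s t, 1 ≤ s → s < t → t ≤ T → Disjoint (G s) (G t))
    (k : ℕ) (r OPT2 : ℝ) (hOPT2 : 0 ≤ OPT2)
    (hr : r = 5 * OPT2 / k) (hrpos : 0 < r)
    (cost : Finset β → ℝ)
    (hGk : ∀ t, 1 ≤ t → t ≤ T → (G t).card < k)
    (hcost : ∀ S : Finset β, S.card ≤ k →
      ∀ I : Finset ℕ, I ⊆ Finset.Icc 1 T → (∀ t ∈ I, G t ⊆ S) →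
        (r / 2) * (∑ t ∈ I, ((G t).card : ℝ)) ≤ cost S)
    (hOPT : ∀ S : Finset β, S.card ≤ k → cost S ≤ OPT2) :
    C2.card ≤ k := by
  classical
  by_contra hlt
  push_neg at hlt
  -- basic positivity facts
  have hkpos : 0 < k := by
    rcases Nat.eq_zero_or_pos k with hk0 | hk
    · rw [hk0] at hr; simp at hr; rw [hr] at hrpos; exact absurd hrpos (lt_irrefl 0)
    · exact hk
  have hkR : (0 : ℝ) < (k : ℝ) := by exact_mod_cast hkpos
  have hOPTpos : 0 < OPT2 := by
    by_contra hO
    push_neg at hO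
    have : r ≤ 0 := by
      rw [hr]
      apply div_nonpos_of_nonpos_of_nonneg <;> nlinarith
    linarith
  have hrk : r * k = 5 * OPT2 := by
    rw [hr]; field_simp
  -- pairwise disjointness on any subset of Icc 1 T
  have hpd : ∀ J : Finset ℕ, J ⊆ Finset.Icc 1 T →
      ∀ x ∈ J, ∀ y ∈ J, x ≠ y → Disjoint (G x) (G y) := by
    intro J hJ x hx y hy hxy
    have hx' := Finset.mem_Icc.mp (hJ hx)
    have hy' := Finset.mem_Icc.mp (hJ hy)
    rcases lt_or_gt_of_ne hxy with h | h
    · exact hdisj x y hx'.1 h hy'.2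
    · exact (hdisj y x hy'.1 h hx'.2).symm
  have hcard : C2.card = ∑ t ∈ Finset.Icc 1 T, (G t).card := by
    rw [hC2]
    exact Finset.card_biUnion (hpd _ (Finset.Subset.refl _))
  obtain ⟨I, hIsub, hIk, hIhalf⟩ :=
    stmt_6_aux T k (fun t => (G t).card)
      (fun t ht => hGk t (Finset.mem_Icc.mp ht).1 (Finset.mem_Icc.mp ht).2)
      (by show k < ∑ t ∈ Finset.Icc 1 T, (G t).card; omega)
  beta_reduce at hIk hIhalf
  set S := I.biUnion G with hS
  have hScard : S.card = ∑ t ∈ I, (G t).card :=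
    Finset.card_biUnion (hpd I hIsub)
  have hSk : S.card ≤ k := by omega
  have h1 := hcost S hSk I hIsub (fun t ht => Finset.subset_biUnion_of_mem G ht)
  have h2 := hOPT S hSk
  have hsumR : ((∑ t ∈ I, (G t).card : ℕ) : ℝ) = ∑ t ∈ I, ((G t).card : ℝ) := by
    push_cast; ring
  have hIR : (k : ℝ) < 2 * ∑ t ∈ I, ((G t).card : ℝ) := by
    rw [← hsumR]
    exact_mod_cast hIhalf
  nlinarith [h1, h2, hIR, hrk, hrpos, hOPTpos]
end

section
/- Let x*, x̂ : F → ℝ_{≥0}, and partition clients C = C_1 ∪ C_2 ∪ C_3. Suppose ỹ (for j ∈ C_1) satisfies 0 ≤ ỹ_{ij} ≤ x*_i/k and ∑_i ỹ_{ij} ≥ 1; y^{C_2} (for j ∈ C_2) satisfies ∑_{j∈C_2} y^{C_2}_{ij} ≤ x*_i and ∑_i y^{C_2}_{ij} ≥ 1; and ŷ (for j ∈ C_3) satisfies ∑_{j∈C_3} ŷ_{ij} ≤ x̂_i and ∑_i ŷ_{ij} ≥ 1. Then the combined assignment y (equal to ỹ, y^{C_2}, ŷ on the respective parts) satisfies: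 for every subset S ⊆ C with |S| ≤ k and every facility i, ∑_{j∈S} y_{ij} ≤ 2x*_i + x̂_i, and ∑_i y_{ij} ≥ 1 for every j ∈ C. -/
/-- Feasibility of the combined static assignment: gluing the static assignments for
`C₁`, `C₂`, `C₃` yields an assignment covering every client and using at most
`2x* + x̂` units of supply in every scenario of at most `k` clients. -/
theorem stmt_7 {ι γ : Type*} [DecidableEq γ] (F : Finset ι) (C C1 C2 C3 : Finset γ)
    (hC : C = C1 ∪ C2 ∪ C3)
    (h12 : Disjoint C1 C2) (h13 : Disjoint C1 C3) (h23 : Disjoint C2 C3)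
    (k : ℕ) (hk : 1 ≤ k)
    (xstar xhat : ι → ℝ)
    (ytil ycc yhat : ι → γ → ℝ)
    (htil : ∀ i ∈ F, ∀ j ∈ C1, 0 ≤ ytil i j ∧ ytil i j ≤ xstar i / k)
    (htilcov : ∀ j ∈ C1, 1 ≤ ∑ i ∈ F, ytil i j)
    (hcc0 : ∀ i ∈ F, ∀ j ∈ C2, 0 ≤ ycc i j)
    (hcccap : ∀ i ∈ F, (∑ j ∈ C2, ycc i j) ≤ xstar i)
    (hcccov : ∀ j ∈ C2, 1 ≤ ∑ i ∈ F, ycc i j)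
    (hhat0 : ∀ i ∈ F, ∀ j ∈ C3, 0 ≤ yhat i j)
    (hhatcap : ∀ i ∈ F, (∑ j ∈ C3, yhat i j) ≤ xhat i)
    (hhatcov : ∀ j ∈ C3, 1 ≤ ∑ i ∈ F, yhat i j)
    (y : ι → γ → ℝ)
    (hy : ∀ i j, y i j = if j ∈ C1 then ytil i j else if j ∈ C2 then ycc i j else yhat i j) :
    (∀ S : Finset γ, S ⊆ C → S.card ≤ k → ∀ i ∈ F,
        (∑ j ∈ S, y i j) ≤ 2 * xstar i + xhat i) ∧
    (∀ j ∈ C, 1 ≤ ∑ i ∈ F, y i j) := by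

  have hx0 : ∀ i ∈ F, 0 ≤ xstar i := fun i hi =>
    le_trans (Finset.sum_nonneg fun j hj => hcc0 i hi j hj) (hcccap i hi)
  have hxh0 : ∀ i ∈ F, 0 ≤ xhat i := fun i hi =>
    le_trans (Finset.sum_nonneg fun j hj => hhat0 i hi j hj) (hhatcap i hi)
  have hkR : (0:ℝ) < (k:ℝ) := by exact_mod_cast hk
  constructor
  · intro S hS hSk i hi
    have hsplit : ∑ j ∈ S, y i j
        = ∑ j ∈ S ∩ C1, ytil i j + (∑ j ∈ (S \ C1) ∩ C2, ycc i j
          + ∑ j ∈ (S \ C1) \ C2, yhat i j) := by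
      rw [← Finset.sum_inter_add_sum_sdiff S C1 (y i),
          ← Finset.sum_inter_add_sum_sdiff (S \ C1) C2 (y i)]
      congr 1
      · exact Finset.sum_congr rfl fun j hj => by
          rw [hy]; simp [Finset.mem_inter.mp hj |>.2]
      congr 1
      · exact Finset.sum_congr rfl fun j hj => by
          obtain ⟨hj1, hj2⟩ := Finset.mem_inter.mp hj
          rw [hy]; simp [(Finset.mem_sdiff.mp hj1).2, hj2]
      · exact Finset.sum_congr rfl fun j hj => by
          obtain ⟨hj1, hj2⟩ := Finset.mem_sdiff.mp hj
          rw [hy]; simp [(Finset.mem_sdiff.mp hj1).2, hj2]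
    have hT1 : ∑ j ∈ S ∩ C1, ytil i j ≤ xstar i := by
      have h1 : ∑ j ∈ S ∩ C1, ytil i j ≤ ((S ∩ C1).card : ℝ) * (xstar i / k) := by
        calc ∑ j ∈ S ∩ C1, ytil i j ≤ ∑ _j ∈ S ∩ C1, xstar i / k :=
              Finset.sum_le_sum fun j hj => (htil i hi j (Finset.mem_inter.mp hj).2).2
          _ = ((S ∩ C1).card : ℝ) * (xstar i / k) := by
              rw [Finset.sum_const, nsmul_eq_mul]
      have hcard : ((S ∩ C1).card : ℝ) ≤ (k : ℝ) := by
        exact_mod_cast le_trans (Finset.card_le_card Finset.inter_subset_left) hSk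
      have hdnn : (0:ℝ) ≤ xstar i / k := div_nonneg (hx0 i hi) hkR.le
      calc ∑ j ∈ S ∩ C1, ytil i j ≤ ((S ∩ C1).card : ℝ) * (xstar i / k) := h1
        _ ≤ (k : ℝ) * (xstar i / k) := mul_le_mul_of_nonneg_right hcard hdnn
        _ = xstar i := by field_simp
    have hT2 : ∑ j ∈ (S \ C1) ∩ C2, ycc i j ≤ xstar i := by
      refine le_trans (Finset.sum_le_sum_of_subset_of_nonneg Finset.inter_subset_right
        (fun j hj _ => hcc0 i hi j hj)) (hcccap i hi)
    have hT3 : ∑ j ∈ (S \ C1) \ C2, yhat i j ≤ xhat i := by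
      have hsub : (S \ C1) \ C2 ⊆ C3 := by
        intro j hj
        obtain ⟨hj1, hj2⟩ := Finset.mem_sdiff.mp hj
        obtain ⟨hjS, hjc1⟩ := Finset.mem_sdiff.mp hj1
        have := hS hjS
        rw [hC] at this
        simp only [Finset.mem_union] at this
        tauto
      refine le_trans (Finset.sum_le_sum_of_subset_of_nonneg hsub
        (fun j hj _ => hhat0 i hi j hj)) (hhatcap i hi)
    rw [hsplit]; linarith
  · intro j hj
    rw [hC] at hj
    simp only [Finset.mem_union] at hj
    rcases hj with (hj1 | hj2) | hj3
    · calc (1:ℝ) ≤ ∑ i ∈ F, ytil i j := htilcov j hj1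
        _ = ∑ i ∈ F, y i j := Finset.sum_congr rfl fun i _ => by rw [hy]; simp [hj1]
    · have hj1 : j ∉ C1 := Finset.disjoint_right.mp h12 hj2
      calc (1:ℝ) ≤ ∑ i ∈ F, ycc i j := hcccov j hj2
        _ = ∑ i ∈ F, y i j := Finset.sum_congr rfl fun i _ => by rw [hy]; simp [hj1, hj2]
    · have hj1 : j ∉ C1 := Finset.disjoint_right.mp h13 hj3
      have hj2 : j ∉ C2 := Finset.disjoint_right.mp h23 hj3
      calc (1:ℝ) ≤ ∑ i ∈ F, yhat i j := hhatcov j hj3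
        _ = ∑ i ∈ F, y i j := Finset.sum_congr rfl fun i _ => by rw [hy]; simp [hj1, hj2]
end

section
/- With the setup of the combined static assignment: if additionally ∑_i d_{ij} ỹ_{ij} ≤ A·OPT_2/k for all j ∈ C_1, ∑_{i, j∈C_2} d_{ij} y^{C_2}_{ij} ≤ OPT_2, and ∑_i d_{ij} ŷ_{ij} ≤ A·OPT_2/k for all j ∈ C_3, then for every scenario S ⊆ C with |S| ≤ k, the assignment cost ∑_{i}∑_{j∈S} d_{ij} y_{ij} is at most (2A+1)·OPT_2. -/
/-- Cost bound for the combined static assignment: if each client of `C₁` and `C₃`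
has static assignment cost at most `A·OPT₂/k` and the whole of `C₂` has cost at
most `OPT₂`, then every scenario of at most `k` clients costs at most
`(2A+1)·OPT₂`. -/
theorem stmt_8 {ι γ : Type*} [DecidableEq γ] (F : Finset ι) (C C1 C2 C3 : Finset γ)
    (hC : C = C1 ∪ C2 ∪ C3)
    (h12 : Disjoint C1 C2) (h13 : Disjoint C1 C3) (h23 : Disjoint C2 C3)
    (k : ℕ) (hk : 1 ≤ k)
    (d : ι → γ → ℝ) (hd : ∀ i ∈ F, ∀ j ∈ C, 0 ≤ d i j)
    (A OPT2 : ℝ) (hA : 0 ≤ A) (hOPT2 : 0 ≤ OPT2)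
    (ytil ycc yhat : ι → γ → ℝ)
    (htil0 : ∀ i ∈ F, ∀ j ∈ C1, 0 ≤ ytil i j)
    (hcc0 : ∀ i ∈ F, ∀ j ∈ C2, 0 ≤ ycc i j)
    (hhat0 : ∀ i ∈ F, ∀ j ∈ C3, 0 ≤ yhat i j)
    (htilcost : ∀ j ∈ C1, (∑ i ∈ F, d i j * ytil i j) ≤ A * OPT2 / k)
    (hcccost : (∑ i ∈ F, ∑ j ∈ C2, d i j * ycc i j) ≤ OPT2)
    (hhatcost : ∀ j ∈ C3, (∑ i ∈ F, d i j * yhat i j) ≤ A * OPT2 / k)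
    (y : ι → γ → ℝ)
    (hy : ∀ i j, y i j = if j ∈ C1 then ytil i j else if j ∈ C2 then ycc i j else yhat i j) :
    ∀ S : Finset γ, S ⊆ C → S.card ≤ k →
      (∑ i ∈ F, ∑ j ∈ S, d i j * y i j) ≤ (2 * A + 1) * OPT2 := by
  intro S hSC hSk
  classical
  set S1 := S ∩ C1 with hS1
  set S2 := S ∩ C2 with hS2
  set S3 := S ∩ C3 with hS3
  have hsplit : S = S1 ∪ S2 ∪ S3 := by
    ext j
    simp only [hS1, hS2, hS3, Finset.mem_union, Finset.mem_inter]
    constructor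
    · intro hj
      have := hSC hj
      rw [hC] at this
      simp only [Finset.mem_union] at this
      tauto
    · tauto
  have hdisj12 : Disjoint S1 S2 := h12.mono (Finset.inter_subset_right) (Finset.inter_subset_right)
  have hdisj3 : Disjoint (S1 ∪ S2) S3 := by
    apply Finset.disjoint_union_left.mpr
    exact ⟨h13.mono Finset.inter_subset_right Finset.inter_subset_right,
      h23.mono Finset.inter_subset_right Finset.inter_subset_right⟩
  rw [Finset.sum_comm]
  have hsum : (∑ j ∈ S, ∑ i ∈ F, d i j * y i j)
      = (∑ j ∈ S1, ∑ i ∈ F, d i j * y i j) + (∑ j ∈ S2, ∑ i ∈ F, d i j * y i j)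
        + (∑ j ∈ S3, ∑ i ∈ F, d i j * y i j) := by
    rw [hsplit, Finset.sum_union hdisj3, Finset.sum_union hdisj12]
  rw [hsum]
  have hkpos : (0:ℝ) < k := by exact_mod_cast hk
  have hAk : 0 ≤ A * OPT2 / k := by positivity
  -- bound for S1
  have hb1 : (∑ j ∈ S1, ∑ i ∈ F, d i j * y i j) ≤ A * OPT2 := by
    calc (∑ j ∈ S1, ∑ i ∈ F, d i j * y i j) ≤ ∑ j ∈ S1, A * OPT2 / k := by
          apply Finset.sum_le_sum
          intro j hj
          have hj1 : j ∈ C1 := (Finset.mem_inter.mp hj).2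
          have : (∑ i ∈ F, d i j * y i j) = ∑ i ∈ F, d i j * ytil i j := by
            apply Finset.sum_congr rfl
            intro i _
            rw [hy i j, if_pos hj1]
          rw [this]
          exact htilcost j hj1
      _ = S1.card * (A * OPT2 / k) := by rw [Finset.sum_const, nsmul_eq_mul]
      _ ≤ k * (A * OPT2 / k) := by
          apply mul_le_mul_of_nonneg_right _ hAk
          exact_mod_cast le_trans (Finset.card_le_card Finset.inter_subset_left) hSk
      _ = A * OPT2 := by field_simp
  have hb3 : (∑ j ∈ S3, ∑ i ∈ F, d i j * y i j) ≤ A * OPT2 := by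
    calc (∑ j ∈ S3, ∑ i ∈ F, d i j * y i j) ≤ ∑ j ∈ S3, A * OPT2 / k := by
          apply Finset.sum_le_sum
          intro j hj
          have hj3 : j ∈ C3 := (Finset.mem_inter.mp hj).2
          have hj1 : j ∉ C1 := fun h => (h13.forall_ne_finset h hj3) rfl
          have hj2 : j ∉ C2 := fun h => (h23.forall_ne_finset h hj3) rfl
          have : (∑ i ∈ F, d i j * y i j) = ∑ i ∈ F, d i j * yhat i j := by
            apply Finset.sum_congr rfl
            intro i _
            rw [hy i j, if_neg hj1, if_neg hj2]
          rw [this]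
          exact hhatcost j hj3
      _ = S3.card * (A * OPT2 / k) := by rw [Finset.sum_const, nsmul_eq_mul]
      _ ≤ k * (A * OPT2 / k) := by
          apply mul_le_mul_of_nonneg_right _ hAk
          exact_mod_cast le_trans (Finset.card_le_card Finset.inter_subset_left) hSk
      _ = A * OPT2 := by field_simp
  have hb2 : (∑ j ∈ S2, ∑ i ∈ F, d i j * y i j) ≤ OPT2 := by
    have heq : (∑ j ∈ S2, ∑ i ∈ F, d i j * y i j) = ∑ j ∈ S2, ∑ i ∈ F, d i j * ycc i j := by
      apply Finset.sum_congr rfl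
      intro j hj
      have hj2 : j ∈ C2 := (Finset.mem_inter.mp hj).2
      have hj1 : j ∉ C1 := fun h => (h12.forall_ne_finset h hj2) rfl
      apply Finset.sum_congr rfl
      intro i _
      rw [hy i j, if_neg hj1, if_pos hj2]
    rw [heq]
    calc (∑ j ∈ S2, ∑ i ∈ F, d i j * ycc i j) ≤ ∑ j ∈ C2, ∑ i ∈ F, d i j * ycc i j := by
          apply Finset.sum_le_sum_of_subset_of_nonneg Finset.inter_subset_right
          intro j hj _
          apply Finset.sum_nonneg
          intro i hi
          exact mul_nonneg (hd i hi j (by rw [hC]; simp [hj])) (hcc0 i hi j hj)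
      _ = ∑ i ∈ F, ∑ j ∈ C2, d i j * ycc i j := Finset.sum_comm
      _ ≤ OPT2 := hcccost
  nlinarith [hb1, hb2, hb3]
end

section
/- In the uncapacitated robust facility location LP, there is an optimal solution in which the second-stage assignment is static: formally, if (x, (y^S)_{S}) is feasible for min ∑_i c_i x_i + max_{|S|≤k} ∑_{i}∑_{j∈S} d_{ij} y^S_{ij} subject to ∑_i y^S_{ij} ≥ 1 and 0 ≤ y^S_{ij} ≤ x_i, then there exists y : F × C → ℝ_{≥0} with ∑_i y_{ij} ≥ 1 and y_{ij} ≤ x_i such that for every scenario S with |S| ≤ k, ∑_i ∑_{j∈S} d_{ij} y_{ij} ≤ max_{|S'|≤k} ∑_i ∑_{j∈S'} d_{ij} y^{S'}_{ij}. -/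
/-- Static assignment policies are optimal for the uncapacitated robust facility
location LP: any feasible scenario-dependent assignment can be replaced by a single
scenario-independent assignment whose cost in every scenario of at most `k` clients
is at most the worst-case cost of the original solution. -/
theorem stmt_11 {ι γ : Type*} [Fintype ι] [Fintype γ] [DecidableEq γ]
    (k : ℕ) (hk : 1 ≤ k)
    (d : ι → γ → ℝ) (hd : ∀ i j, 0 ≤ d i j)
    (x : ι → ℝ) (hx : ∀ i, 0 ≤ x i)
    (Y : Finset γ → ι → γ → ℝ)
    (hY0 : ∀ S : Finset γ, S.card ≤ k → ∀ i, ∀ j ∈ S, 0 ≤ Y S i j ∧ Y S i j ≤ x i)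
    (hYcov : ∀ S : Finset γ, S.card ≤ k → ∀ j ∈ S, 1 ≤ ∑ i, Y S i j) :
    ∃ y : ι → γ → ℝ,
      (∀ i j, 0 ≤ y i j ∧ y i j ≤ x i) ∧
      (∀ j, 1 ≤ ∑ i, y i j) ∧
      (∀ S : Finset γ, S.card ≤ k →
        (∑ i, ∑ j ∈ S, d i j * y i j) ≤
          sSup {v : ℝ | ∃ S' : Finset γ, S'.card ≤ k ∧
            v = ∑ i, ∑ j ∈ S', d i j * Y S' i j}) := by
  classical
  -- For each client j, choose the assignment minimizing its cost subject to the constraints.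
  have hK : ∀ j : γ, ∃ f : ι → ℝ, ((∀ i, f i ∈ Set.Icc 0 (x i)) ∧ 1 ≤ ∑ i, f i) ∧
      ∀ g : ι → ℝ, ((∀ i, g i ∈ Set.Icc 0 (x i)) ∧ 1 ≤ ∑ i, g i) →
        ∑ i, d i j * f i ≤ ∑ i, d i j * g i := by
    intro j
    set K : Set (ι → ℝ) := {f | (∀ i, f i ∈ Set.Icc 0 (x i)) ∧ 1 ≤ ∑ i, f i} with hKdef
    have hcs : IsCompact K := by
      have h1 : K = (Set.univ.pi fun i => Set.Icc 0 (x i)) ∩ {f | 1 ≤ ∑ i, f i} := by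
        ext f; simp [hKdef, Set.mem_pi, and_comm, forall_and, Pi.le_def]
      rw [h1]
      exact (isCompact_univ_pi fun i => isCompact_Icc).inter_right
        (isClosed_le continuous_const (continuous_finset_sum _ fun i _ => continuous_apply i))
    have hk1 : ({j} : Finset γ).card ≤ k := by simpa using hk
    have hne : K.Nonempty := by
      refine ⟨fun i => Y {j} i j, fun i => ?_, hYcov {j} hk1 j (by simp)⟩
      exact ⟨(hY0 {j} hk1 i j (by simp)).1, (hY0 {j} hk1 i j (by simp)).2⟩
    obtain ⟨f, hfK, hfmin⟩ := hcs.exists_isMinOn hne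
      (Continuous.continuousOn
        (continuous_finset_sum _ fun i _ => continuous_const.mul (continuous_apply i)))
    exact ⟨f, hfK, fun g hg => hfmin hg⟩
  choose f hfK hfmin using hK
  refine ⟨fun i j => f j i, fun i j => ⟨((hfK j).1 i).1, ((hfK j).1 i).2⟩,
    fun j => (hfK j).2, ?_⟩
  intro S hS
  set g : Finset γ → ℝ := fun S' => ∑ i, ∑ j ∈ S', d i j * Y S' i j with hgdef
  have hbdd : BddAbove {v : ℝ | ∃ S' : Finset γ, S'.card ≤ k ∧ v = g S'} := by
    refine BddAbove.mono (fun v hv => ?_) (Set.finite_range g).bddAbove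
    obtain ⟨S', _, h⟩ := hv
    exact ⟨S', h.symm⟩
  calc ∑ i, ∑ j ∈ S, d i j * f j i = ∑ j ∈ S, ∑ i, d i j * f j i := Finset.sum_comm
    _ ≤ ∑ j ∈ S, ∑ i, d i j * Y S i j := by
        refine Finset.sum_le_sum fun j hj => hfmin j (fun i => Y S i j)
          ⟨fun i => ⟨(hY0 S hS i j hj).1, (hY0 S hS i j hj).2⟩, hYcov S hS j hj⟩
    _ = ∑ i, ∑ j ∈ S, d i j * Y S i j := Finset.sum_comm
    _ ≤ _ := le_csSup hbdd ⟨S, hS, rfl⟩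
end

section
/- Greedy ball selection cost bound: let clients 1,...,m have values L_1 ≤ ... ≤ L_m and balls B_j of radius αL_j (α ≥ 1) around each client in a metric space. Select balls greedily in ascending order of L_j, skipping any ball intersecting a previously selected ball, and open one facility inside each selected ball. Then every client j is within distance 3αL_j of some opened facility. -/
/-- Greedy ball selection cost bound: clients have sorted values `L`, balls of radius
`α L j`; the greedy selection `Sel` opens a facility `f t` inside each selected ball,
and every skipped client's ball intersects a selected ball of no larger value. Then
every client is within distance `3 α L j` of some opened facility. -/
theorem stmt_14 {M : Type*} [MetricSpace M] (m : ℕ) (c : Fin m → M)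
    (L : Fin m → ℝ) (hL0 : ∀ j, 0 ≤ L j) (hLmono : Monotone L)
    (α : ℝ) (hα : 1 ≤ α)
    (Sel : Finset (Fin m)) (f : Fin m → M)
    (hopen : ∀ t ∈ Sel, dist (f t) (c t) ≤ α * L t)
    (hskip : ∀ j : Fin m, j ∉ Sel → ∃ t ∈ Sel, L t ≤ L j ∧
      ∃ v : M, dist v (c t) ≤ α * L t ∧ dist v (c j) ≤ α * L j) :
    ∀ j : Fin m, ∃ t ∈ Sel, dist (c j) (f t) ≤ 3 * α * L j := by
  intro j
  by_cases hj : j ∈ Sel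
  · refine ⟨j, hj, ?_⟩
    rw [dist_comm]
    calc dist (f j) (c j) ≤ α * L j := hopen j hj
      _ ≤ 3 * α * L j := by nlinarith [hL0 j]
  · obtain ⟨t, ht, hLt, v, hv1, hv2⟩ := hskip j hj
    refine ⟨t, ht, ?_⟩
    have h1 : dist (c j) (f t) ≤ dist (c j) v + dist v (c t) + dist (c t) (f t) :=
      dist_triangle4 _ _ _ _
    rw [dist_comm (c j) v] at h1
    rw [dist_comm (c t) (f t)] at h1
    have := hopen t ht
    nlinarith [hL0 j, hL0 t]
end

section
/- Scaling to a g-close solution: let (x, y) satisfy ∑_i y_{ij} ≥ 1 for all j and ∑_{j∈S} y_{ij} ≤ x_i for all scenarios S with |S| ≤ k, and let α ∈ (0,1). For each client j, let i_j* be defined by ordering facilities by ascending d_{ij} and truncating y_{·j} at cumulative mass α; define ȳ by ȳ_{ij} = y_{ij}/α for facilities up to i_j* and 0 beyond, and x̄ = x/α. Then (x̄, ȳ) is feasible (∑_i ȳ_{ij} ≥ 1, ∑_{j∈S} ȳ_{ij} ≤ x̄_i for all scenarios S), every i with ȳ_{ij} > 0 satisfies d_{ij} ≤ d_j(α), and the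 worst-case assignment cost of ȳ is at most 1/α times that of y. -/
/-- Scaling to a `g`-close solution: truncating each client's assignment at its
`α`-point prefix `T j` and rescaling by `1/α` (with supplies scaled by `1/α`)
preserves feasibility for the static soft-capacitated LP, every used facility is
within the `α`-point radius `Dα j`, and the worst-case assignment cost increases by
at most a factor `1/α`. -/
theorem stmt_16 {ι γ : Type*} [Fintype ι] [Fintype γ] [DecidableEq ι] [DecidableEq γ]
    (k : ℕ) (hk : 1 ≤ k)
    (d : ι → γ → ℝ) (hd : ∀ i j, 0 ≤ d i j)
    (x : ι → ℝ) (y : ι → γ → ℝ) (hy0 : ∀ i j, 0 ≤ y i j)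
    (hycov : ∀ j, 1 ≤ ∑ i, y i j)
    (hycap : ∀ S : Finset γ, S.card ≤ k → ∀ i, (∑ j ∈ S, y i j) ≤ x i)
    (α : ℝ) (hα0 : 0 < α) (hα1 : α < 1)
    (T : γ → Finset ι)
    (hTmass : ∀ j, α ≤ ∑ i ∈ T j, y i j)
    (hTprefix : ∀ j, ∀ i ∈ T j, ∀ i', i' ∉ T j → d i j ≤ d i' j)
    (Dα : γ → ℝ) (hDα : ∀ j, ∀ i ∈ T j, d i j ≤ Dα j)
    (ybar : ι → γ → ℝ)
    (hybar : ∀ i j, ybar i j = if i ∈ T j then y i j / α else 0) :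
    (∀ j, 1 ≤ ∑ i, ybar i j) ∧
    (∀ S : Finset γ, S.card ≤ k → ∀ i, (∑ j ∈ S, ybar i j) ≤ x i / α) ∧
    (∀ i j, 0 < ybar i j → d i j ≤ Dα j) ∧
    sSup {v : ℝ | ∃ S : Finset γ, S.card ≤ k ∧ v = ∑ i, ∑ j ∈ S, d i j * ybar i j}
      ≤ (1 / α) *
        sSup {v : ℝ | ∃ S : Finset γ, S.card ≤ k ∧ v = ∑ i, ∑ j ∈ S, d i j * y i j} := by
  refine ⟨?_, ?_, ?_, ?_⟩
  · intro j
    have : ∑ i, ybar i j = (∑ i ∈ T j, y i j) / α := by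
      simp only [hybar]
      rw [Finset.sum_ite_mem, Finset.univ_inter, Finset.sum_div]
    rw [this, le_div_iff₀ hα0, one_mul]
    exact hTmass j
  · intro S hS i
    have h1 : ∀ j ∈ S, ybar i j ≤ y i j / α := by
      intro j _
      rw [hybar]
      split
      · exact le_rfl
      · exact div_nonneg (hy0 i j) hα0.le
    calc ∑ j ∈ S, ybar i j ≤ ∑ j ∈ S, y i j / α := Finset.sum_le_sum h1
      _ = (∑ j ∈ S, y i j) / α := (Finset.sum_div _ _ _).symm
      _ ≤ x i / α := by gcongr; exact hycap S hS i
  · intro i j hpos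
    by_contra h
    have hiT : i ∉ T j := fun hiT => h (hDα j i hiT)
    rw [hybar, if_neg hiT] at hpos
    exact lt_irrefl 0 hpos
  · have hBfin : {v : ℝ | ∃ S : Finset γ, S.card ≤ k ∧ v = ∑ i, ∑ j ∈ S, d i j * y i j}.Finite := by
      apply (Set.finite_univ.image (fun S : Finset γ => ∑ i, ∑ j ∈ S, d i j * y i j)).subset
      rintro v ⟨S, _, rfl⟩
      exact ⟨S, trivial, rfl⟩
    have hAne : ({v : ℝ | ∃ S : Finset γ, S.card ≤ k ∧ v = ∑ i, ∑ j ∈ S, d i j * ybar i j}).Nonempty :=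
      ⟨0, ∅, by simp, by simp⟩
    apply csSup_le hAne
    rintro v ⟨S, hS, rfl⟩
    have hle : ∑ i, ∑ j ∈ S, d i j * ybar i j ≤ (1 / α) * ∑ i, ∑ j ∈ S, d i j * y i j := by
      rw [Finset.mul_sum]
      refine Finset.sum_le_sum fun i _ => ?_
      rw [Finset.mul_sum]
      refine Finset.sum_le_sum fun j _ => ?_
      rw [hybar]
      split
      · exact le_of_eq (by field_simp)
      · rw [mul_zero]
        exact mul_nonneg (by positivity) (mul_nonneg (hd i j) (hy0 i j))
    have hmem : (∑ i, ∑ j ∈ S, d i j * y i j) ∈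
        {v : ℝ | ∃ S : Finset γ, S.card ≤ k ∧ v = ∑ i, ∑ j ∈ S, d i j * y i j} :=
      ⟨S, hS, rfl⟩
    have hsup := le_csSup hBfin.bddAbove hmem
    calc ∑ i, ∑ j ∈ S, d i j * ybar i j
        ≤ (1 / α) * ∑ i, ∑ j ∈ S, d i j * y i j := hle
      _ ≤ (1 / α) * sSup _ := by
          apply mul_le_mul_of_nonneg_left hsup (by positivity)
end
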